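/- For all natural numbers s, t with 1 ≤ t ≤ s, in ℤ[x,x⁻¹][[q]] one has (1 − q)(1 − qx)(1 − qx⁻¹) · ∑_{ℓ=0}^{t−1} ∑_{n=0}^{t−1−ℓ} ∑_{σ=ℓ}^{∞} ∑_{k=0}^{σ} q^{σ+2n} χ_{s+k−ℓ}(x) = ∑_{τ=1}^{t} q^{t−τ} (χ_s(x) − q^τ χ_{s−τ}(x)). (Character form of the branching rule: the so(2,4) rectangular partially massless module D(s+2−t;(s,s)) of spin s and depth t restricts to the direct sum ⊕_{τ=1}^{t} D(s+2−τ;(s)) of so(2,3) partially massless spin-s modules of depths τ = 1,…,t.) -/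

import Mathlib

/-- The so(3) character `χ_n(x) = ∑_{k=0}^n x^{n-2k}` in ℤ[x,x⁻¹]. -/
noncomputable def chi (n : ℕ) : LaurentPolynomial ℤ :=
  ∑ k ∈ Finset.range (n + 1), LaurentPolynomial.T ((n : ℤ) - 2 * k)

/-!
The generating series of each so(4) block `ℓ` is rational in `q`: the inner sum over `k` is a
partial sum, killed by `1 - q`, and the resulting series `∑_σ χ_{s+σ} q^σ` is killed by
`(1 - qx)(1 - qx⁻¹) = 1 - χ₁ q + q²` up to `χ_s - χ_{s-1} q`, by the Clebsch–Gordan rule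
`χ₁ χ_{n+1} = χ_{n+2} + χ_n`; so the identity holds for every sequence obeying this recurrence.
Grouping the blocks along the diagonals `n + ℓ = j`, the numerators add up to
`χ_s + Q_j - q Q_{j+1}` with `Q_j = χ_{s-1} + ⋯ + χ_{s-j}` (`sumBelow`), and the sum over `j`
with weights `q^j` telescopes to the right-hand side.
-/

open Finset PowerSeries

section

variable {R : Type*} [CommRing R]

theorem PowerSeries.one_sub_X_mul_mk_sum_range (b : ℕ → R) (ℓ : ℕ) :
    (1 - X) * mk (fun n => ∑ k ∈ range (n + ℓ + 1), b k) =
      mk (fun n => b (n + ℓ)) + C (∑ k ∈ range ℓ, b k) := by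
  ext (_ | n)
  · simp [sub_mul, sum_range_succ, add_comm]
  · simp [sub_mul, coeff_succ_X_mul, sum_range_succ _ (n + ℓ + 1), add_right_comm n 1 ℓ]

theorem PowerSeries.one_sub_C_mul_X_add_X_sq_mul_mk {c : R} {a : ℕ → R}
    (ha : ∀ n, c * a (n + 1) = a (n + 2) + a n) :
    (1 - C c * X + X ^ 2) * mk a = C (a 0) + C (a 1 - c * a 0) * X := by
  ext (_ | _ | n)
  · simp
  · simp [sub_mul, add_mul, mul_assoc, coeff_succ_X_mul, coeff_X_pow_mul']
  · simp [sub_mul, add_mul, mul_assoc, coeff_succ_X_mul, coeff_X_pow_mul', ha n]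

def sumBelow (a : ℕ → R) (s ℓ : ℕ) : R := ∑ τ ∈ Icc 1 ℓ, a (s - τ)

variable {a : ℕ → R} {s : ℕ}

theorem sumBelow_zero : sumBelow a s 0 = 0 := by simp [sumBelow]

theorem sumBelow_succ (ℓ : ℕ) : sumBelow a s (ℓ + 1) = sumBelow a s ℓ + a (s - (ℓ + 1)) :=
  sum_Icc_succ_top (by omega) _

theorem sum_range_eq_sumBelow (ℓ : ℕ) : ∑ k ∈ range ℓ, a (s + k - ℓ) = sumBelow a s ℓ := by
  induction ℓ with
  | zero => simp [sumBelow_zero]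
  | succ ℓ ih =>
    rw [sum_range_succ', sumBelow_succ, ← ih]
    simp only [add_zero, Nat.add_sub_add_right, ← add_assoc]

theorem mul_sumBelow_succ {c : R} (ha : ∀ n, c * a (n + 1) = a (n + 2) + a n) {ℓ : ℕ}
    (hℓ : ℓ + 2 ≤ s) :
    c * sumBelow a s (ℓ + 1) = a s + sumBelow a s ℓ + sumBelow a s (ℓ + 2) - a (s - 1) := by
  induction ℓ with
  | zero =>
    obtain ⟨m, rfl⟩ : ∃ m, s = m + 2 := ⟨s - 2, by omega⟩
    simp only [zero_add, sumBelow_succ, sumBelow_zero, Nat.add_one_sub_one, ha m, add_zero,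
      Nat.reduceAdd, add_tsub_cancel_right]
    abel
  | succ ℓ ih =>
    obtain ⟨m, rfl⟩ : ∃ m, s = m + ℓ + 3 := ⟨s - (ℓ + 3), by omega⟩
    have hQ : sumBelow a (m + ℓ + 3) (ℓ + 1) = sumBelow a (m + ℓ + 3) ℓ + a (m + 2) := by
      rw [sumBelow_succ, show m + ℓ + 3 - (ℓ + 1) = m + 2 by omega]
    rw [sumBelow_succ (ℓ + 1), show ℓ + 1 + 2 = ℓ + 2 + 1 from rfl, sumBelow_succ (ℓ + 2),
      show m + ℓ + 3 - (ℓ + 1 + 1) = m + 1 by omega, show m + ℓ + 3 - (ℓ + 2 + 1) = m by omega]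
    linear_combination ih (by omega) + ha m - hQ

/-- `q^{-ℓ} ∑_{σ ≥ ℓ} ∑_{k ≤ σ} q^σ a_{s+k-ℓ}`, the block of so(4) content `(s+σ-ℓ, s-ℓ)`. -/
noncomputable def blockSeries (a : ℕ → R) (s ℓ : ℕ) : R⟦X⟧ :=
  mk fun σ => ∑ k ∈ range (σ + ℓ + 1), a (s + k - ℓ)

noncomputable def blockNumerator (c : R) (a : ℕ → R) (s ℓ : ℕ) : R⟦X⟧ :=
  C (a s) - C (a (s - 1)) * X + (1 - C c * X + X ^ 2) * C (sumBelow a s ℓ)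

theorem one_sub_X_mul_mul_blockSeries {c : R} (ha : ∀ n, c * a (n + 1) = a (n + 2) + a n)
    (hs : 1 ≤ s) (ℓ : ℕ) :
    (1 - X) * (1 - C c * X + X ^ 2) * blockSeries a s ℓ = blockNumerator c a s ℓ := by
  have hrec : ∀ n, c * a (s + n + 1) = a (s + n + 2) + a (s + n) := fun n => ha (s + n)
  have hs' : a (s + 1) - c * a s = -a (s - 1) := by
    obtain ⟨m, rfl⟩ : ∃ m, s = m + 1 := ⟨s - 1, by omega⟩
    rw [Nat.add_sub_cancel]
    linear_combination -ha m
  rw [mul_comm (1 - X), mul_assoc, blockSeries, one_sub_X_mul_mk_sum_range, mul_add,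
    sum_range_eq_sumBelow]
  simp only [Nat.add_sub_cancel, ← add_assoc]
  rw [one_sub_C_mul_X_add_X_sq_mul_mk hrec]
  simp only [add_zero, hs', blockNumerator, map_neg]
  ring

theorem sum_range_X_pow_mul_blockNumerator {c : R} (ha : ∀ n, c * a (n + 1) = a (n + 2) + a n)
    {j : ℕ} (hj : j + 1 ≤ s) :
    ∑ ℓ ∈ range (j + 1), X ^ (j - ℓ) * blockNumerator c a s ℓ =
      C (a s) + C (sumBelow a s j) - X * C (sumBelow a s (j + 1)) := by
  induction j with
  | zero =>
    simp only [zero_add, range_one, zero_tsub, pow_zero, blockNumerator, one_mul, sum_singleton,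
      sumBelow_zero, map_zero, mul_zero, add_zero, sumBelow_succ, sub_right_inj]
    ring
  | succ j ih =>
    have hshift : ∀ ℓ ∈ range (j + 1),
        X ^ (j + 1 - ℓ) * blockNumerator c a s ℓ = X * (X ^ (j - ℓ) * blockNumerator c a s ℓ) := by
      intro ℓ hℓ
      rw [← mul_assoc, ← pow_succ', Nat.sub_add_comm (by simpa [Nat.lt_succ_iff] using hℓ)]
    rw [sum_range_succ, sum_congr rfl hshift, ← mul_sum, ih (by omega), Nat.sub_self, pow_zero,
      one_mul, blockNumerator]
    have hQ := congrArg C (mul_sumBelow_succ ha (ℓ := j) (by omega))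
    simp only [map_mul, map_add, map_sub] at hQ
    linear_combination -X * hQ

theorem sum_sum_X_pow_mul_blockNumerator {c : R} (ha : ∀ n, c * a (n + 1) = a (n + 2) + a n)
    {t : ℕ} (ht : t ≤ s) :
    ∑ ℓ ∈ range t, ∑ n ∈ range (t - ℓ), X ^ (2 * n + ℓ) * blockNumerator c a s ℓ =
      (∑ j ∈ range t, X ^ j) * C (a s) - X ^ t * C (sumBelow a s t) := by
  have hdiag : ∀ j ∈ range t, ∑ ℓ ∈ range (j + 1), X ^ (2 * (j - ℓ) + ℓ) * blockNumerator c a s ℓ =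
      X ^ j * C (a s) + (X ^ j * C (sumBelow a s j) - X ^ (j + 1) * C (sumBelow a s (j + 1))) := by
    intro j hj
    have hpow : ∀ ℓ ∈ range (j + 1), X ^ (2 * (j - ℓ) + ℓ) * blockNumerator c a s ℓ =
        X ^ j * (X ^ (j - ℓ) * blockNumerator c a s ℓ) := by
      intro ℓ hℓ
      rw [← mul_assoc, ← pow_add]
      congr 2
      simp only [mem_range] at hℓ
      omega
    rw [sum_congr rfl hpow, ← mul_sum, sum_range_X_pow_mul_blockNumerator ha
      (by simp only [mem_range] at hj; omega)]
    ring
  rw [← sum_range_diag_flip, sum_congr rfl hdiag, sum_add_distrib, sum_range_sub', ← sum_mul]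
  simp [sumBelow_zero, sub_eq_add_neg]

theorem sum_Icc_X_pow_mul_sub (t : ℕ) :
    ∑ τ ∈ Icc 1 t, X ^ (t - τ) * (C (a s) - C (a (s - τ)) * X ^ τ) =
      (∑ j ∈ range t, X ^ j) * C (a s) - X ^ t * C (sumBelow a s t) := by
  have hpow : ∀ τ ∈ Icc 1 t, X ^ (t - τ) * (C (a s) - C (a (s - τ)) * X ^ τ) =
      X ^ (t - τ) * C (a s) - X ^ t * C (a (s - τ)) := by
    intro τ hτ
    rw [mul_sub, ← mul_assoc, mul_right_comm, ← pow_add, Nat.sub_add_cancel (mem_Icc.1 hτ).2]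
  rw [sum_congr rfl hpow, sum_sub_distrib, ← sum_mul, ← mul_sum, sumBelow, map_sum,
    ← Ico_add_one_right_eq_Icc, sum_Ico_reflect _ _ le_rfl, range_eq_Ico]
  simp

theorem mk_sum_sum_ite_eq_sum_sum_X_pow_mul_blockSeries (t : ℕ) :
    PowerSeries.mk (fun m => ∑ ℓ ∈ range t, ∑ n ∈ range (t - ℓ),
        if 2 * n + ℓ ≤ m then ∑ k ∈ range (m - 2 * n + 1), a (s + k - ℓ) else 0) =
      ∑ ℓ ∈ range t, ∑ n ∈ range (t - ℓ), X ^ (2 * n + ℓ) * blockSeries a s ℓ := by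
  ext m
  simp only [coeff_mk, map_sum, coeff_X_pow_mul', blockSeries]
  refine sum_congr rfl fun ℓ _ => sum_congr rfl fun n _ => ?_
  split_ifs with h
  · congr 2
    omega
  · rfl

theorem one_sub_X_mul_mul_mk_branching {c : R} (ha : ∀ n, c * a (n + 1) = a (n + 2) + a n)
    {t : ℕ} (hts : t ≤ s) :
    (1 - X) * (1 - C c * X + X ^ 2) *
        PowerSeries.mk (fun m => ∑ ℓ ∈ range t, ∑ n ∈ range (t - ℓ),
          if 2 * n + ℓ ≤ m then ∑ k ∈ range (m - 2 * n + 1), a (s + k - ℓ) else 0) =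
      ∑ τ ∈ Icc 1 t, X ^ (t - τ) * (C (a s) - C (a (s - τ)) * X ^ τ) := by
  rw [mk_sum_sum_ite_eq_sum_sum_X_pow_mul_blockSeries, mul_sum, sum_Icc_X_pow_mul_sub,
    ← sum_sum_X_pow_mul_blockNumerator ha hts]
  refine sum_congr rfl fun ℓ hℓ => ?_
  rw [mul_sum]
  refine sum_congr rfl fun n _ => ?_
  rw [mul_left_comm, one_sub_X_mul_mul_blockSeries ha (by simp only [mem_range] at hℓ; omega)]

end

open LaurentPolynomial (T T_add)

theorem chi_succ (n : ℕ) : chi (n + 1) = T (n + 1) + T (-1) * chi n := by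
  rw [chi, sum_range_succ', chi, mul_sum, add_comm]
  congr 1
  refine sum_congr rfl fun k _ => ?_
  rw [← T_add]; congr 1; push_cast; ring

theorem chi_one : chi 1 = T 1 + T (-1) := by
  simp [chi, sum_range_succ]

theorem chi_one_mul_chi_succ (n : ℕ) : chi 1 * chi (n + 1) = chi (n + 2) + chi n := by
  have h₁ : (T 1 * T (n + 1) : LaurentPolynomial ℤ) = T (n + 2) := by rw [← T_add]; ring_nf
  have h₂ : (T (-1) * T 1 : LaurentPolynomial ℤ) = 1 := by rw [← T_add]; simp
  have h₃ : chi (n + 2) = T (n + 2) + T (-1) * chi (n + 1) := by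
    rw [chi_succ (n + 1)]; push_cast; ring_nf
  rw [chi_one]
  linear_combination (T 1 : LaurentPolynomial ℤ) * chi_succ n - h₃ + h₁ + h₂ * chi n

theorem one_sub_T_one_mul_X_mul_one_sub_T_neg_one_mul_X :
    (1 - C (T 1) * X) * (1 - C (T (-1)) * X) =
      (1 - C (chi 1) * X + X ^ 2 : PowerSeries (LaurentPolynomial ℤ)) := by
  have h : C (T 1 : LaurentPolynomial ℤ) * C (T (-1)) = 1 := by
    rw [← map_mul, ← T_add]
    simp
  rw [chi_one, map_add]
  linear_combination X ^ 2 * h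

theorem rectangular_PM_branching_general (s t : ℕ) (hts : t ≤ s) :
    (1 - PowerSeries.X) *
      (1 - PowerSeries.C (R := LaurentPolynomial ℤ) (LaurentPolynomial.T 1) * PowerSeries.X) *
      (1 - PowerSeries.C (R := LaurentPolynomial ℤ) (LaurentPolynomial.T (-1)) * PowerSeries.X) *
      PowerSeries.mk (fun m =>
        ∑ ℓ ∈ Finset.range t, ∑ n ∈ Finset.range (t - ℓ),
          if 2 * n + ℓ ≤ m then
            ∑ k ∈ Finset.range ((m - 2 * n) + 1), chi (s + k - ℓ)
          else 0) =
    ∑ τ ∈ Finset.Icc 1 t,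
      PowerSeries.X ^ (t - τ) *
        (PowerSeries.C (R := LaurentPolynomial ℤ) (chi s) -
          PowerSeries.C (R := LaurentPolynomial ℤ) (chi (s - τ)) * PowerSeries.X ^ τ) := by
  rw [mul_assoc (1 - X), one_sub_T_one_mul_X_mul_one_sub_T_neg_one_mul_X]
  exact one_sub_X_mul_mul_mk_branching chi_one_mul_chi_succ hts

/-- Branching of the so(2,4) rectangular partially massless module `D(s+2-t;(s,s))`
onto so(2,3), in character form:
`(1-q)(1-qx)(1-qx⁻¹) · ∑_{ℓ=0}^{t-1} ∑_{n=0}^{t-1-ℓ} ∑_{σ≥ℓ} ∑_{k=0}^{σ} q^{σ+2n} χ_{s+k-ℓ}(x)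
  = ∑_{τ=1}^{t} q^{t-τ} (χ_s(x) - q^τ χ_{s-τ}(x))`.
On the left, the coefficient of `q^m` collects the terms with `σ = m - 2n ≥ ℓ`. -/
theorem rectangular_PM_branching (s t : ℕ) (ht : 1 ≤ t) (hts : t ≤ s) :
    (1 - PowerSeries.X) *
      (1 - PowerSeries.C (R := LaurentPolynomial ℤ) (LaurentPolynomial.T 1) * PowerSeries.X) *
      (1 - PowerSeries.C (R := LaurentPolynomial ℤ) (LaurentPolynomial.T (-1)) * PowerSeries.X) *
      PowerSeries.mk (fun m =>
        ∑ ℓ ∈ Finset.range t, ∑ n ∈ Finset.range (t - ℓ),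
          if 2 * n + ℓ ≤ m then
            ∑ k ∈ Finset.range ((m - 2 * n) + 1), chi (s + k - ℓ)
          else 0) =
    ∑ τ ∈ Finset.Icc 1 t,
      PowerSeries.X ^ (t - τ) *
        (PowerSeries.C (R := LaurentPolynomial ℤ) (chi s) -
          PowerSeries.C (R := LaurentPolynomial ℤ) (chi (s - τ)) * PowerSeries.X ^ τ) :=
  rectangular_PM_branching_general s t hts
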